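/- Let B be a Blaschke product with zero sequence Λ, let z be a point of the unit disk and δ ∈ (0,1) be such that Λ ∩ D(z,δ) = ∅, and let ρ_Δ denote the pseudohyperbolic distance in the disk Δ = D(z,δ). Then: (a) |B(z)|^{(1+ρ_Δ(z,w))/(1−ρ_Δ(z,w))} ≤ |B(w)| ≤ |B(z)|^{(1−ρ_Δ(z,w))/(1+ρ_Δ(z,w))} for every w ∈ Δ; (b) (1−|z|²)|B'(z)| ≤ (|B(z)|/δ)·log(1/|B(z)|²). -/

import Mathlib

open Complex Metric Set Filter

noncomputable section

/-- The open unit disk in `ℂ`. -/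
def unitDisk : Set ℂ := {z : ℂ | ‖z‖ < 1}

/-- A real-valued function is harmonic on a set `Ω ⊆ ℂ` if, near every point of `Ω`,
it is the real part of a holomorphic function. -/
def HarmonicOnSet (u : ℂ → ℝ) (Ω : Set ℂ) : Prop :=
  ∀ z ∈ Ω, ∃ r > 0, Metric.ball z r ⊆ Ω ∧
    ∃ F : ℂ → ℂ, DifferentiableOn ℂ F (Metric.ball z r) ∧
      ∀ w ∈ Metric.ball z r, u w = (F w).re

/-- A positive harmonic function on the unit disk. -/
def PosHarmonic (H : ℂ → ℝ) : Prop :=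
  HarmonicOnSet H unitDisk ∧ ∀ z ∈ unitDisk, 0 < H z

/-- The pseudohyperbolic distance `ρ(z,w) = |z - w| / |1 - z̄ w|`. -/
def pd (z w : ℂ) : ℝ := ‖z - w‖ / ‖1 - (starRingEnd ℂ) z * w‖

/-- The open pseudohyperbolic disk `D(a,r)`. -/
def pBall (a : ℂ) (r : ℝ) : Set ℂ := {w ∈ unitDisk | pd a w < r}

/-- The closed pseudohyperbolic disk. -/
def pClosedBall (a : ℂ) (r : ℝ) : Set ℂ := {w ∈ unitDisk | pd a w ≤ r}

/-- An individual Blaschke factor with zero `a`. -/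
def blaschkeFactor (a z : ℂ) : ℂ :=
  if a = 0 then z
  else ((starRingEnd ℂ) a / (‖a‖ : ℂ)) * ((a - z) / (1 - (starRingEnd ℂ) a * z))

/-- The Blaschke product with zero sequence `Λ`. -/
def blaschkeProduct (Λ : ℕ → ℂ) (z : ℂ) : ℂ := ∏' n, blaschkeFactor (Λ n) z

/-- A Blaschke sequence: a sequence in the unit disk satisfying the Blaschke condition. -/
def BlaschkeSeq (Λ : ℕ → ℂ) : Prop :=
  (∀ n, Λ n ∈ unitDisk) ∧ Summable fun n => 1 - ‖Λ n‖

/-- The Nevanlinna class: holomorphic functions on the disk such that `log⁺ |f|`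
has a positive harmonic majorant. -/
def Nev (f : ℂ → ℂ) : Prop :=
  DifferentiableOn ℂ f unitDisk ∧
  ∃ H : ℂ → ℝ, PosHarmonic H ∧ ∀ z ∈ unitDisk, Real.log (‖f z‖) ≤ H z

/-- `Λ` is an interpolating sequence for the Nevanlinna class. -/
def NevInterpolating (Λ : ℕ → ℂ) : Prop :=
  Function.Injective Λ ∧ (∀ n, Λ n ∈ unitDisk) ∧
  ∃ H : ℂ → ℝ, PosHarmonic H ∧
    ∀ n, Real.exp (-H (Λ n)) ≤ ∏' k : {k : ℕ // k ≠ n}, pd (Λ k.1) (Λ n)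

/-- A Nevanlinna interpolating Blaschke product. -/
def NevInterpBlaschke (B : ℂ → ℂ) : Prop :=
  ∃ Λ : ℕ → ℂ, NevInterpolating Λ ∧ B = blaschkeProduct Λ

/-- The ideal generated by `f 0, …, f (m-1)` in the Nevanlinna class
(membership being recorded through the values on the unit disk). -/
def idealI (m : ℕ) (f : Fin m → ℂ → ℂ) : Set (ℂ → ℂ) :=
  {g | ∃ h : Fin m → ℂ → ℂ, (∀ i, Nev (h i)) ∧
        ∀ z ∈ unitDisk, g z = ∑ i, f i z * h i z}

/-- The set `J(f 0, …, f (m-1))`. -/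
def idealJ (m : ℕ) (f : Fin m → ℂ → ℂ) : Set (ℂ → ℂ) :=
  {g | Nev g ∧ ∃ H : ℂ → ℝ, PosHarmonic H ∧
        ∀ z ∈ unitDisk,
          ‖g z‖ ≤ Real.exp (H z) * ∑ i, ‖f i z‖}

/-- The ideal generated by a pair `f₁, f₂` in the Nevanlinna class. -/
def idealI2 (f₁ f₂ : ℂ → ℂ) : Set (ℂ → ℂ) :=
  {g | ∃ h₁ h₂ : ℂ → ℂ, Nev h₁ ∧ Nev h₂ ∧
        ∀ z ∈ unitDisk, g z = f₁ z * h₁ z + f₂ z * h₂ z}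

/-- The set `J(f₁, f₂)`. -/
def idealJ2 (f₁ f₂ : ℂ → ℂ) : Set (ℂ → ℂ) :=
  {g | Nev g ∧ ∃ H : ℂ → ℝ, PosHarmonic H ∧
        ∀ z ∈ unitDisk,
          ‖g z‖ ≤ Real.exp (H z) * (‖f₁ z‖ + ‖f₂ z‖)}

/-- Harmonic measure, at `z`, of the outer boundary `∂𝔻` in a subdomain `Ω` of the unit
disk, described à la Perron: the supremum of the values `u z` of harmonic functions
`0 ≤ u ≤ 1` on `Ω` whose boundary limits superior vanish at all boundary points of `Ω`
lying inside the unit disk. -/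
def hmOuter (Ω : Set ℂ) (z : ℂ) : ℝ :=
  sSup {t : ℝ | ∃ u : ℂ → ℝ, HarmonicOnSet u Ω ∧
    (∀ w ∈ Ω, 0 ≤ u w ∧ u w ≤ 1) ∧
    (∀ ζ ∈ frontier Ω, ‖ζ‖ < 1 →
      ∀ ε > 0, ∀ᶠ w in nhdsWithin ζ Ω, u w ≤ ε) ∧
    t = u z}

/-- The domain `Ω_n^H`: the unit disk minus the (closed) pseudohyperbolic disks
`𝒟_k^H = D(λ_k, e^{-H(λ_k)})` over the `k ≠ n` with `ρ(λ_k, λ_n) ≤ 1/2`. -/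
def omegaDom (Λ : ℕ → ℂ) (H : ℂ → ℝ) (n : ℕ) : Set ℂ :=
  unitDisk \ ⋃ k ∈ {k : ℕ | k ≠ n ∧ pd (Λ k) (Λ n) ≤ 1/2},
    pClosedBall (Λ k) (Real.exp (-H (Λ k)))

/-- A function invertible in the Nevanlinna class. -/
def NevInvertible (g : ℂ → ℂ) : Prop :=
  Nev g ∧ ∃ h : ℂ → ℂ, Nev h ∧ ∀ z ∈ unitDisk, g z * h z = 1

/-!
Inside `Δ = D(z, δ)` the product has no zeros, and everything reduces to the factors,
`|b_n(w)| = ρ(λ_n, w)`. With `s = ρ(z, λ_n) ≥ δ` and `t = ρ(z, w) < δ`, the strong triangle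
inequality for `ρ` (checked at the origin and transported by a disc automorphism) gives
`(s - t)/(1 - s t) ≤ ρ(λ_n, w) ≤ (s + t)/(1 + s t)`, and Bernoulli's inequality and weighted
AM–GM turn these bounds into `s ^ ((δ + t)/(δ - t))` and `s ^ ((δ - t)/(δ + t))`. Taking
logarithms and summing over `n` gives (a).

For (b), the logarithmic derivative of the locally uniformly convergent product is the sum of
those of the factors, and the Schwarz–Pick identity `(1 - |z|²)|b_n'(z)| = 1 - |b_n(z)|²` gives
`(1 - |z|²)|b_n'/b_n|(z) = (1 - s²)/s ≤ (2/δ)(-log s)`; summing `-log s` over `n` gives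
`log (1/|B(z)|)`.
-/

open ComplexConjugate

section Pseudohyperbolic

variable {a w x y z : ℂ}

lemma one_sub_norm_mul_le_norm_one_sub_conj_mul (a w : ℂ) :
    1 - ‖a‖ * ‖w‖ ≤ ‖1 - conj a * w‖ := by
  simpa [norm_mul] using norm_sub_norm_le (1 : ℂ) (conj a * w)

lemma norm_one_sub_conj_mul_le (a w : ℂ) : ‖1 - conj a * w‖ ≤ 1 + ‖a‖ * ‖w‖ := by
  simpa [norm_mul] using norm_sub_le (1 : ℂ) (conj a * w)

lemma norm_one_sub_conj_mul_pos (ha : ‖a‖ < 1) (hw : ‖w‖ < 1) : 0 < ‖1 - conj a * w‖ :=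
  lt_of_lt_of_le (by nlinarith [norm_nonneg a, norm_nonneg w])
    (one_sub_norm_mul_le_norm_one_sub_conj_mul a w)

lemma one_sub_conj_mul_ne_zero (ha : ‖a‖ < 1) (hw : ‖w‖ < 1) : 1 - conj a * w ≠ 0 :=
  norm_pos_iff.1 (norm_one_sub_conj_mul_pos ha hw)

lemma norm_one_sub_conj_mul_sq_sub_norm_sub_sq (a w : ℂ) :
    ‖1 - conj a * w‖ ^ 2 - ‖a - w‖ ^ 2 = (1 - ‖a‖ ^ 2) * (1 - ‖w‖ ^ 2) := by
  simp only [← Complex.normSq_eq_norm_sq, Complex.normSq_apply, Complex.sub_re, Complex.sub_im,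
    Complex.one_re, Complex.one_im, Complex.mul_re, Complex.mul_im, Complex.conj_re,
    Complex.conj_im]
  ring

lemma pd_nonneg (a w : ℂ) : 0 ≤ pd a w := by
  unfold pd; positivity

lemma pd_comm (a w : ℂ) : pd a w = pd w a := by
  rw [pd, pd, norm_sub_rev, ← Complex.norm_conj (1 - conj a * w)]
  simp [mul_comm]

lemma one_sub_pd_sq (ha : ‖a‖ < 1) (hw : ‖w‖ < 1) :
    1 - pd a w ^ 2 = (1 - ‖a‖ ^ 2) * (1 - ‖w‖ ^ 2) / ‖1 - conj a * w‖ ^ 2 := by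
  rw [pd, div_pow, one_sub_div (pow_pos (norm_one_sub_conj_mul_pos ha hw) 2).ne',
    norm_one_sub_conj_mul_sq_sub_norm_sub_sq]

lemma pd_lt_one (ha : ‖a‖ < 1) (hw : ‖w‖ < 1) : pd a w < 1 := by
  have h : 0 < 1 - pd a w ^ 2 := by
    rw [one_sub_pd_sq ha hw]
    have := norm_one_sub_conj_mul_pos ha hw
    have : 0 < 1 - ‖a‖ ^ 2 := by nlinarith [norm_nonneg a]
    have : 0 < 1 - ‖w‖ ^ 2 := by nlinarith [norm_nonneg w]
    positivity
  nlinarith [pd_nonneg a w]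

lemma pd_pos (ha : ‖a‖ < 1) (hw : ‖w‖ < 1) (hne : a ≠ w) : 0 < pd a w :=
  div_pos (norm_pos_iff.2 (sub_ne_zero.2 hne)) (norm_one_sub_conj_mul_pos ha hw)

lemma pd_le_norm_add_norm_div (hx : ‖x‖ < 1) (hy : ‖y‖ < 1) :
    pd x y ≤ (‖x‖ + ‖y‖) / (1 + ‖x‖ * ‖y‖) := by
  have hD := norm_one_sub_conj_mul_pos hx hy
  have hxy : 0 ≤ (1 - ‖x‖ ^ 2) * (1 - ‖y‖ ^ 2) :=
    mul_nonneg (by nlinarith [norm_nonneg x]) (by nlinarith [norm_nonneg y])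
  have hpos : 0 < 1 + ‖x‖ * ‖y‖ := by positivity
  have key : 1 - ((‖x‖ + ‖y‖) / (1 + ‖x‖ * ‖y‖)) ^ 2
      = (1 - ‖x‖ ^ 2) * (1 - ‖y‖ ^ 2) / (1 + ‖x‖ * ‖y‖) ^ 2 := by
    field_simp; ring
  have : 1 - ((‖x‖ + ‖y‖) / (1 + ‖x‖ * ‖y‖)) ^ 2 ≤ 1 - pd x y ^ 2 := by
    rw [key, one_sub_pd_sq hx hy]
    gcongr
    exact norm_one_sub_conj_mul_le x y
  exact (pow_le_pow_iff_left₀ (pd_nonneg x y) (by positivity) two_ne_zero).1 (by linarith)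

lemma norm_sub_norm_div_le_pd (hx : ‖x‖ < 1) (hy : ‖y‖ < 1) :
    (‖x‖ - ‖y‖) / (1 - ‖x‖ * ‖y‖) ≤ pd x y := by
  have hD := norm_one_sub_conj_mul_pos hx hy
  have hpos : 0 < 1 - ‖x‖ * ‖y‖ := by nlinarith [norm_nonneg x, norm_nonneg y]
  have key : 1 - ((‖x‖ - ‖y‖) / (1 - ‖x‖ * ‖y‖)) ^ 2
      = (1 - ‖x‖ ^ 2) * (1 - ‖y‖ ^ 2) / (1 - ‖x‖ * ‖y‖) ^ 2 := by
    field_simp; ring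
  have : 1 - pd x y ^ 2 ≤ 1 - ((‖x‖ - ‖y‖) / (1 - ‖x‖ * ‖y‖)) ^ 2 := by
    rw [key, one_sub_pd_sq hx hy]
    gcongr
    · exact mul_nonneg (by nlinarith [norm_nonneg x]) (by nlinarith [norm_nonneg y])
    · exact one_sub_norm_mul_le_norm_one_sub_conj_mul x y
  exact (abs_le_of_sq_le_sq' (by linarith) (pd_nonneg x y)).2

/-- The disc automorphism exchanging `z` and `0`. -/
def mobius (z u : ℂ) : ℂ := (z - u) / (1 - conj z * u)

lemma norm_mobius (z u : ℂ) : ‖mobius z u‖ = pd z u := by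
  rw [mobius, norm_div, pd]

lemma pd_mobius (hz : ‖z‖ < 1) (ha : ‖a‖ < 1) (hw : ‖w‖ < 1) :
    pd (mobius z a) (mobius z w) = pd a w := by
  have hza := one_sub_conj_mul_ne_zero hz ha
  have hzw := one_sub_conj_mul_ne_zero hz hw
  have hza' : 1 - z * conj a ≠ 0 := by
    simpa [mul_comm] using (map_ne_zero (starRingEnd ℂ)).2 hza
  have hsub : mobius z a - mobius z w
      = (w - a) * (1 - conj z * z) / ((1 - conj z * a) * (1 - conj z * w)) := by
    rw [mobius, mobius, div_sub_div _ _ hza hzw]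
    ring
  have hone : 1 - conj (mobius z a) * mobius z w
      = (1 - conj a * w) * (1 - conj z * z) / ((1 - z * conj a) * (1 - conj z * w)) := by
    simp only [mobius, map_div₀, map_sub, map_mul, map_one, Complex.conj_conj]
    rw [div_mul_div_comm, one_sub_div (mul_ne_zero hza' hzw)]
    ring
  have hnorm : ‖1 - z * conj a‖ = ‖1 - conj z * a‖ := by
    rw [← Complex.norm_conj]; simp [mul_comm]
  have hzz := norm_pos_iff.2 (one_sub_conj_mul_ne_zero hz hz)
  rw [pd, pd, hsub, hone, norm_div, norm_div, norm_mul, norm_mul, norm_mul, norm_mul, hnorm,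
    norm_sub_rev w a, mul_div_mul_comm, mul_div_mul_comm,
    mul_div_mul_right _ _ (div_pos hzz (norm_pos_iff.2 hzw)).ne',
    div_div_div_cancel_right₀ (norm_pos_iff.2 hza).ne']

lemma pd_le_pd_add_pd_div (hz : ‖z‖ < 1) (ha : ‖a‖ < 1) (hw : ‖w‖ < 1) :
    pd a w ≤ (pd z a + pd z w) / (1 + pd z a * pd z w) := by
  simpa only [pd_mobius hz ha hw, norm_mobius] using
    pd_le_norm_add_norm_div (x := mobius z a) (y := mobius z w)
      (by rw [norm_mobius]; exact pd_lt_one hz ha) (by rw [norm_mobius]; exact pd_lt_one hz hw)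

lemma pd_sub_pd_div_le_pd (hz : ‖z‖ < 1) (ha : ‖a‖ < 1) (hw : ‖w‖ < 1) :
    (pd z a - pd z w) / (1 - pd z a * pd z w) ≤ pd a w := by
  simpa only [pd_mobius hz ha hw, norm_mobius] using
    norm_sub_norm_div_le_pd (x := mobius z a) (y := mobius z w)
      (by rw [norm_mobius]; exact pd_lt_one hz ha) (by rw [norm_mobius]; exact pd_lt_one hz hw)

end Pseudohyperbolic

section Scalar

variable {s t δ : ℝ}

lemma rpow_le_sub_div_one_sub_mul (ht : 0 ≤ t) (htδ : t < δ) (hδs : δ ≤ s) (hs : s ≤ 1) :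
    s ^ ((1 + t / δ) / (1 - t / δ)) ≤ (s - t) / (1 - s * t) := by
  have hδ : 0 < δ := ht.trans_lt htδ
  have hs0 : 0 < s := hδ.trans_le hδs
  have hst : 0 < s - t := by linarith
  have hst1 : 0 < 1 - s * t := by nlinarith
  set q := (s + t) / (s - t) with hq_def
  have hq : 1 ≤ q := by rw [le_div_iff₀ hst]; linarith
  have hqp : q ≤ (1 + t / δ) / (1 - t / δ) := by
    rw [show (1 + t / δ) / (1 - t / δ) = (δ + t) / (δ - t) by field_simp,
      div_le_div_iff₀ hst (by linarith)]
    nlinarith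
  have hinv : 0 ≤ s⁻¹ - 1 := by rw [sub_nonneg, one_le_inv₀ hs0]; exact hs
  have hbern : 1 + q * (s⁻¹ - 1) ≤ s⁻¹ ^ q := by
    simpa using one_add_mul_self_le_rpow_one_add (s := s⁻¹ - 1) (by linarith) hq
  have hval : 1 + q * (s⁻¹ - 1) = (s + t - 2 * s * t) / (s * (s - t)) := by
    rw [hq_def]; field_simp; ring
  have hnum : 0 < s + t - 2 * s * t := by nlinarith
  calc s ^ ((1 + t / δ) / (1 - t / δ)) ≤ s ^ q := Real.rpow_le_rpow_of_exponent_ge hs0 hs hqp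
    _ = (s⁻¹ ^ q)⁻¹ := by rw [Real.inv_rpow hs0.le, inv_inv]
    _ ≤ (1 + q * (s⁻¹ - 1))⁻¹ := inv_anti₀ (by rw [hval]; positivity) hbern
    _ ≤ (s - t) / (1 - s * t) := by
      rw [hval, inv_div, div_le_div_iff₀ hnum hst1]
      nlinarith [mul_nonneg (mul_nonneg hst.le ht) (sq_nonneg (1 - s))]

lemma add_div_one_add_mul_le_rpow (ht : 0 ≤ t) (htδ : t < δ) (hδs : δ ≤ s) (hs : s ≤ 1) :
    (s + t) / (1 + s * t) ≤ s ^ ((1 - t / δ) / (1 + t / δ)) := by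
  have hδ : 0 < δ := ht.trans_lt htδ
  have hs0 : 0 < s := hδ.trans_le hδs
  have hst : 0 < s + t := by linarith
  set θ := (s - t) / (s + t) with hθ_def
  have hθ0 : 0 ≤ θ := div_nonneg (by linarith) hst.le
  have hθ1 : θ ≤ 1 := by rw [div_le_one hst]; linarith
  have hθp : (1 - t / δ) / (1 + t / δ) ≤ θ := by
    rw [show (1 - t / δ) / (1 + t / δ) = (δ - t) / (δ + t) by field_simp,
      div_le_div_iff₀ (by linarith) hst]
    nlinarith
  have hamgm : s ^ (1 - θ) ≤ (1 - θ) * s + θ := by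
    simpa using Real.geom_mean_le_arith_mean2_weighted (p₂ := 1) (by linarith) hθ0 hs0.le
      zero_le_one (by ring)
  have hval : (1 - θ) * s + θ = (2 * s * t + s - t) / (s + t) := by
    rw [hθ_def]; field_simp; ring
  have hnum : 0 < 2 * s * t + s - t := by nlinarith
  calc (s + t) / (1 + s * t) ≤ s / ((1 - θ) * s + θ) := by
        rw [hval, div_div_eq_mul_div, div_le_div_iff₀ (by positivity) hnum]
        nlinarith [mul_nonneg (mul_nonneg hst.le ht) (sq_nonneg (1 - s))]
    _ ≤ s / s ^ (1 - θ) := div_le_div_of_nonneg_left hs0.le (by positivity) hamgm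
    _ = s ^ θ := by rw [Real.rpow_sub hs0, Real.rpow_one, div_div_cancel₀ hs0.ne']
    _ ≤ s ^ ((1 - t / δ) / (1 + t / δ)) := Real.rpow_le_rpow_of_exponent_ge hs0 hs hθp

lemma one_sub_sq_div_le_neg_log (hδ : 0 < δ) (hδs : δ ≤ s) (hs : s ≤ 1) :
    (1 - s ^ 2) / s ≤ 2 / δ * -Real.log s := by
  have hs0 : 0 < s := hδ.trans_le hδs
  have hlog : Real.log (s ^ 2) ≤ s ^ 2 - 1 := Real.log_le_sub_one_of_pos (by positivity)
  rw [Real.log_pow] at hlog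
  calc (1 - s ^ 2) / s ≤ (1 - s ^ 2) / δ :=
        div_le_div_of_nonneg_left (by nlinarith) hδ hδs
    _ ≤ 2 / δ * -Real.log s := by
        rw [div_mul_eq_mul_div, div_le_div_iff_of_pos_right hδ]; push_cast at hlog; linarith

end Scalar

section BlaschkeFactor

variable {a w : ℂ}

lemma norm_blaschkeFactor (a w : ℂ) : ‖blaschkeFactor a w‖ = pd a w := by
  rcases eq_or_ne a 0 with rfl | ha
  · simp [blaschkeFactor, pd]
  · simp [blaschkeFactor, ha, pd]

lemma blaschkeFactor_zero : blaschkeFactor 0 = id := by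
  funext w; simp [blaschkeFactor]

lemma norm_one_sub_blaschkeFactor_le (ha : ‖a‖ < 1) (hw : ‖w‖ < 1) :
    ‖1 - blaschkeFactor a w‖ ≤ (1 - ‖a‖) * (1 + ‖w‖) / (1 - ‖w‖) := by
  have hw1 : 0 < 1 - ‖w‖ := by linarith
  rcases eq_or_ne a 0 with rfl | ha0
  · rw [blaschkeFactor_zero, norm_zero, sub_zero, one_mul, id, le_div_iff₀ hw1]
    nlinarith [norm_sub_le (1 : ℂ) w, norm_one (α := ℂ), norm_nonneg w]
  · have hr : 0 < ‖a‖ := norm_pos_iff.2 ha0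
    have hr' : ((‖a‖ : ℝ) : ℂ) ≠ 0 := Complex.ofReal_ne_zero.2 hr.ne'
    have hD := one_sub_conj_mul_ne_zero ha hw
    have hid : 1 - blaschkeFactor a w = (1 - ‖a‖) * (‖a‖ + conj a * w) / (‖a‖ * (1 - conj a * w)) := by
      rw [blaschkeFactor, if_neg ha0]
      field_simp
      linear_combination -Complex.conj_mul' a
    have hnum : ‖(‖a‖ : ℂ) + conj a * w‖ ≤ ‖a‖ * (1 + ‖w‖) := by
      simpa [norm_mul, mul_add] using norm_add_le ((‖a‖ : ℝ) : ℂ) (conj a * w)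
    have hden : 1 - ‖w‖ ≤ ‖1 - conj a * w‖ :=
      le_trans (by nlinarith [norm_nonneg w]) (one_sub_norm_mul_le_norm_one_sub_conj_mul a w)
    have h1a : ‖(1 : ℂ) - ‖a‖‖ = 1 - ‖a‖ := by
      rw [← Complex.ofReal_one, ← Complex.ofReal_sub, Complex.norm_real, Real.norm_of_nonneg]
      linarith
    rw [hid, norm_div, norm_mul, norm_mul, h1a, Complex.norm_real, Real.norm_of_nonneg hr.le]
    calc (1 - ‖a‖) * ‖(‖a‖ : ℂ) + conj a * w‖ / (‖a‖ * ‖1 - conj a * w‖)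
        ≤ (1 - ‖a‖) * (‖a‖ * (1 + ‖w‖)) / (‖a‖ * (1 - ‖w‖)) := by
          gcongr
      _ = (1 - ‖a‖) * (1 + ‖w‖) / (1 - ‖w‖) := by field_simp

lemma hasDerivAt_blaschkeFactor (ha : a ≠ 0) (hw : 1 - conj a * w ≠ 0) :
    HasDerivAt (blaschkeFactor a)
      (conj a / ‖a‖ * ((conj a * a - 1) / (1 - conj a * w) ^ 2)) w := by
  have hf : blaschkeFactor a = fun u => conj a / ‖a‖ * ((a - u) / (1 - conj a * u)) := by
    funext u; simp [blaschkeFactor, ha]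
  have h1 : HasDerivAt (fun u : ℂ => a - u) (-1) w := by
    simpa using (hasDerivAt_id w).const_sub a
  have h2 : HasDerivAt (fun u : ℂ => 1 - conj a * u) (-conj a) w := by
    simpa using ((hasDerivAt_id w).const_mul (conj a)).const_sub 1
  rw [hf]
  refine ((h1.fun_div h2 hw).const_mul (conj a / ‖a‖)).congr_deriv ?_
  ring

lemma differentiableAt_blaschkeFactor (hw : 1 - conj a * w ≠ 0) :
    DifferentiableAt ℂ (blaschkeFactor a) w := by
  rcases eq_or_ne a 0 with rfl | ha
  · rw [blaschkeFactor_zero]; exact differentiableAt_id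
  · exact (hasDerivAt_blaschkeFactor ha hw).differentiableAt

lemma norm_deriv_blaschkeFactor (ha : ‖a‖ < 1) (hw : ‖w‖ < 1) :
    ‖deriv (blaschkeFactor a) w‖ = (1 - ‖a‖ ^ 2) / ‖1 - conj a * w‖ ^ 2 := by
  rcases eq_or_ne a 0 with rfl | ha0
  · simp [blaschkeFactor_zero]
  · have hr : ‖a‖ ≠ 0 := norm_ne_zero_iff.2 ha0
    rw [(hasDerivAt_blaschkeFactor ha0 (one_sub_conj_mul_ne_zero ha hw)).deriv, norm_mul,
      norm_div, norm_div, Complex.conj_mul', Complex.norm_conj, Complex.norm_real,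
      Real.norm_of_nonneg (norm_nonneg a), div_self hr, one_mul, norm_pow, ← norm_neg,
      neg_sub, ← Complex.ofReal_one, ← Complex.ofReal_pow, ← Complex.ofReal_sub,
      Complex.norm_real, Real.norm_of_nonneg (by nlinarith [norm_nonneg a])]

lemma one_sub_sq_mul_norm_logDeriv_blaschkeFactor (ha : ‖a‖ < 1) (hw : ‖w‖ < 1) :
    (1 - ‖w‖ ^ 2) * ‖logDeriv (blaschkeFactor a) w‖ = (1 - pd a w ^ 2) / pd a w := by
  rw [logDeriv_apply, norm_div, norm_deriv_blaschkeFactor ha hw, norm_blaschkeFactor,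
    one_sub_pd_sq ha hw]
  ring

end BlaschkeFactor

section BlaschkeProduct

variable {Λ : ℕ → ℂ} {w : ℂ}

lemma summable_norm_blaschkeFactor_sub_one (hΛ : BlaschkeSeq Λ) (hw : ‖w‖ < 1) :
    Summable fun n => ‖blaschkeFactor (Λ n) w - 1‖ :=
  (hΛ.2.mul_right ((1 + ‖w‖) / (1 - ‖w‖))).of_nonneg_of_le (fun _ => norm_nonneg _) fun n => by
    rw [norm_sub_rev, ← mul_div_assoc]
    exact norm_one_sub_blaschkeFactor_le (hΛ.1 n) hw

lemma multipliable_blaschkeFactor (hΛ : BlaschkeSeq Λ) (hw : ‖w‖ < 1) :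
    Multipliable fun n => blaschkeFactor (Λ n) w := by
  simpa using multipliable_one_add_of_summable (summable_norm_blaschkeFactor_sub_one hΛ hw)

lemma summable_log_pd (hΛ : BlaschkeSeq Λ) (hw : ‖w‖ < 1) :
    Summable fun n => Real.log (pd (Λ n) w) := by
  have h : Summable fun n => pd (Λ n) w - 1 :=
    (summable_norm_blaschkeFactor_sub_one hΛ hw).of_norm_bounded fun n => by
      simpa [← norm_blaschkeFactor] using abs_norm_sub_norm_le (blaschkeFactor (Λ n) w) 1
  simpa using Real.summable_log_one_add_of_summable h

lemma norm_blaschkeProduct_eq_exp (hΛ : BlaschkeSeq Λ) (hw : ‖w‖ < 1) (hne : ∀ n, Λ n ≠ w) :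
    ‖blaschkeProduct Λ w‖ = Real.exp (∑' n, Real.log (pd (Λ n) w)) := by
  rw [Real.rexp_tsum_eq_tprod (fun n => pd_pos (hΛ.1 n) hw (hne n)) (summable_log_pd hΛ hw),
    blaschkeProduct, (multipliable_blaschkeFactor hΛ hw).norm_tprod]
  simp_rw [norm_blaschkeFactor]

lemma multipliableLocallyUniformlyOn_blaschkeFactor (hΛ : BlaschkeSeq Λ) {R : ℝ} (hR : R < 1) :
    MultipliableLocallyUniformlyOn (fun n => blaschkeFactor (Λ n)) (Metric.ball 0 R) := by
  have hbound : ∀ n, ∀ u ∈ Metric.ball (0 : ℂ) R,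
      ‖blaschkeFactor (Λ n) u - 1‖ ≤ (1 - ‖Λ n‖) * ((1 + R) / (1 - R)) := fun n u hu => by
    rw [mem_ball_zero_iff] at hu
    rw [norm_sub_rev, ← mul_div_assoc]
    refine (norm_one_sub_blaschkeFactor_le (hΛ.1 n) (hu.trans hR)).trans ?_
    have : ‖Λ n‖ < 1 := hΛ.1 n
    have : 0 ≤ R := (norm_nonneg u).trans hu.le
    gcongr
  have hcont : ∀ n, ContinuousOn (fun u => blaschkeFactor (Λ n) u - 1) (Metric.ball 0 R) :=
    fun n u hu => by
      rw [mem_ball_zero_iff] at hu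
      exact ((differentiableAt_blaschkeFactor (one_sub_conj_mul_ne_zero (hΛ.1 n)
        (hu.trans hR))).continuousAt.sub continuousAt_const).continuousWithinAt
  simpa using Summable.multipliableLocallyUniformlyOn_nat_one_add Metric.isOpen_ball
    (hΛ.2.mul_right _) (Eventually.of_forall hbound) hcont

end BlaschkeProduct

section Estimates

variable {Λ : ℕ → ℂ} {a w z : ℂ} {δ : ℝ}

lemma rpow_pd_le_pd (hz : ‖z‖ < 1) (ha : ‖a‖ < 1) (hw : ‖w‖ < 1) (hδa : δ ≤ pd z a)
    (hwδ : pd z w < δ) : pd z a ^ ((1 + pd z w / δ) / (1 - pd z w / δ)) ≤ pd a w :=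
  (rpow_le_sub_div_one_sub_mul (pd_nonneg z w) hwδ hδa (pd_lt_one hz ha).le).trans
    (pd_sub_pd_div_le_pd hz ha hw)

lemma pd_le_rpow_pd (hz : ‖z‖ < 1) (ha : ‖a‖ < 1) (hw : ‖w‖ < 1) (hδa : δ ≤ pd z a)
    (hwδ : pd z w < δ) : pd a w ≤ pd z a ^ ((1 - pd z w / δ) / (1 + pd z w / δ)) :=
  (pd_le_pd_add_pd_div hz ha hw).trans
    (add_div_one_add_mul_le_rpow (pd_nonneg z w) hwδ hδa (pd_lt_one hz ha).le)

lemma ne_of_pd_pos (h : 0 < pd z a) : a ≠ z := by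
  rintro rfl
  simp [pd] at h

lemma blaschkeProduct_ne_zero (hΛ : BlaschkeSeq Λ) (hw : ‖w‖ < 1) (hne : ∀ n, Λ n ≠ w) :
    blaschkeProduct Λ w ≠ 0 := by
  rw [← norm_ne_zero_iff, norm_blaschkeProduct_eq_exp hΛ hw hne]
  exact (Real.exp_pos _).ne'

lemma rpow_norm_blaschkeProduct_le (hΛ : BlaschkeSeq Λ) (hz : ‖z‖ < 1) (hw : ‖w‖ < 1)
    (hnez : ∀ n, Λ n ≠ z) (hnew : ∀ n, Λ n ≠ w) {c : ℝ} (h : ∀ n, pd (Λ n) z ^ c ≤ pd (Λ n) w) :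
    ‖blaschkeProduct Λ z‖ ^ c ≤ ‖blaschkeProduct Λ w‖ := by
  rw [norm_blaschkeProduct_eq_exp hΛ hz hnez, norm_blaschkeProduct_eq_exp hΛ hw hnew,
    ← Real.exp_mul, Real.exp_le_exp, mul_comm, ← tsum_mul_left]
  refine ((summable_log_pd hΛ hz).mul_left c).tsum_le_tsum (fun n => ?_) (summable_log_pd hΛ hw)
  rw [← Real.log_rpow (pd_pos (hΛ.1 n) hz (hnez n))]
  exact Real.log_le_log (Real.rpow_pos_of_pos (pd_pos (hΛ.1 n) hz (hnez n)) c) (h n)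

lemma norm_blaschkeProduct_le_rpow (hΛ : BlaschkeSeq Λ) (hz : ‖z‖ < 1) (hw : ‖w‖ < 1)
    (hnez : ∀ n, Λ n ≠ z) (hnew : ∀ n, Λ n ≠ w) {c : ℝ} (h : ∀ n, pd (Λ n) w ≤ pd (Λ n) z ^ c) :
    ‖blaschkeProduct Λ w‖ ≤ ‖blaschkeProduct Λ z‖ ^ c := by
  rw [norm_blaschkeProduct_eq_exp hΛ hz hnez, norm_blaschkeProduct_eq_exp hΛ hw hnew,
    ← Real.exp_mul, Real.exp_le_exp, mul_comm, ← tsum_mul_left]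
  refine (summable_log_pd hΛ hw).tsum_le_tsum (fun n => ?_) ((summable_log_pd hΛ hz).mul_left c)
  rw [← Real.log_rpow (pd_pos (hΛ.1 n) hz (hnez n))]
  exact Real.log_le_log (pd_pos (hΛ.1 n) hw (hnew n)) (h n)

lemma norm_blaschkeProduct_harnack (hΛ : BlaschkeSeq Λ) (hz : ‖z‖ < 1) (hw : ‖w‖ < 1)
    (hsep : ∀ n, δ ≤ pd z (Λ n)) (hwδ : pd z w < δ) :
    ‖blaschkeProduct Λ z‖ ^ ((1 + pd z w / δ) / (1 - pd z w / δ)) ≤ ‖blaschkeProduct Λ w‖ ∧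
      ‖blaschkeProduct Λ w‖ ≤ ‖blaschkeProduct Λ z‖ ^ ((1 - pd z w / δ) / (1 + pd z w / δ)) := by
  have hδ : 0 < δ := (pd_nonneg z w).trans_lt hwδ
  have hnez : ∀ n, Λ n ≠ z := fun n => ne_of_pd_pos (hδ.trans_le (hsep n))
  have hnew : ∀ n, Λ n ≠ w := fun n h => (hsep n).not_gt (h ▸ hwδ)
  constructor
  · refine rpow_norm_blaschkeProduct_le hΛ hz hw hnez hnew fun n => ?_
    rw [pd_comm]
    exact rpow_pd_le_pd hz (hΛ.1 n) hw (hsep n) hwδ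
  · refine norm_blaschkeProduct_le_rpow hΛ hz hw hnez hnew fun n => ?_
    rw [pd_comm (Λ n) z]
    exact pd_le_rpow_pd hz (hΛ.1 n) hw (hsep n) hwδ

lemma logDeriv_blaschkeProduct (hΛ : BlaschkeSeq Λ) (hz : ‖z‖ < 1) (hne : ∀ n, Λ n ≠ z)
    (hsum : Summable fun n => logDeriv (blaschkeFactor (Λ n)) z) :
    logDeriv (blaschkeProduct Λ) z = ∑' n, logDeriv (blaschkeFactor (Λ n)) z := by
  have hR : (1 + ‖z‖) / 2 < 1 := by linarith
  have hzR : z ∈ Metric.ball (0 : ℂ) ((1 + ‖z‖) / 2) := by rw [mem_ball_zero_iff]; linarith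
  refine logDeriv_tprod_eq_tsum Metric.isOpen_ball hzR (fun n => ?_) (fun n u hu => ?_) hsum
    (multipliableLocallyUniformlyOn_blaschkeFactor hΛ hR) (blaschkeProduct_ne_zero hΛ hz hne)
  · rw [← norm_ne_zero_iff, norm_blaschkeFactor]
    exact (pd_pos (hΛ.1 n) hz (hne n)).ne'
  · rw [mem_ball_zero_iff] at hu
    exact (differentiableAt_blaschkeFactor
      (one_sub_conj_mul_ne_zero (hΛ.1 n) (hu.trans hR))).differentiableWithinAt

lemma one_sub_sq_mul_norm_deriv_blaschkeProduct_le (hΛ : BlaschkeSeq Λ) (hz : ‖z‖ < 1)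
    (hδ : 0 < δ) (hsep : ∀ n, δ ≤ pd z (Λ n)) :
    (1 - ‖z‖ ^ 2) * ‖deriv (blaschkeProduct Λ) z‖ ≤
      ‖blaschkeProduct Λ z‖ / δ * Real.log (1 / ‖blaschkeProduct Λ z‖ ^ 2) := by
  have hne : ∀ n, Λ n ≠ z := fun n => ne_of_pd_pos (hδ.trans_le (hsep n))
  set L := fun n => logDeriv (blaschkeFactor (Λ n)) z
  have hz2 : 0 < 1 - ‖z‖ ^ 2 := by nlinarith [norm_nonneg z]
  have hterm : ∀ n, (1 - ‖z‖ ^ 2) * ‖L n‖ ≤ 2 / δ * -Real.log (pd (Λ n) z) := fun n => by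
    rw [one_sub_sq_mul_norm_logDeriv_blaschkeFactor (hΛ.1 n) hz]
    exact one_sub_sq_div_le_neg_log hδ (pd_comm z (Λ n) ▸ hsep n) (pd_lt_one (hΛ.1 n) hz).le
  have hlog := (summable_log_pd hΛ hz).neg.mul_left (2 / δ)
  have hsumL : Summable fun n => ‖L n‖ :=
    (hlog.mul_left (1 - ‖z‖ ^ 2)⁻¹).of_nonneg_of_le (fun n => norm_nonneg _)
      fun n => (le_inv_mul_iff₀ hz2).2 (hterm n)
  have hderiv : deriv (blaschkeProduct Λ) z = blaschkeProduct Λ z * ∑' n, L n := by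
    rw [← logDeriv_blaschkeProduct hΛ hz hne hsumL.of_norm, logDeriv_apply,
      mul_div_cancel₀ _ (blaschkeProduct_ne_zero hΛ hz hne)]
  have hlogB : Real.log (1 / ‖blaschkeProduct Λ z‖ ^ 2)
      = 2 * ∑' n, -Real.log (pd (Λ n) z) := by
    rw [norm_blaschkeProduct_eq_exp hΛ hz hne, one_div, Real.log_inv, Real.log_pow,
      Real.log_exp, tsum_neg]
    push_cast; ring
  have hB := norm_nonneg (blaschkeProduct Λ z)
  calc (1 - ‖z‖ ^ 2) * ‖deriv (blaschkeProduct Λ) z‖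
      = ‖blaschkeProduct Λ z‖ * ((1 - ‖z‖ ^ 2) * ‖∑' n, L n‖) := by
        rw [hderiv, norm_mul]; ring
    _ ≤ ‖blaschkeProduct Λ z‖ * ∑' n, (1 - ‖z‖ ^ 2) * ‖L n‖ := by
        rw [tsum_mul_left]
        exact mul_le_mul_of_nonneg_left
          (mul_le_mul_of_nonneg_left (norm_tsum_le_tsum_norm hsumL) hz2.le) hB
    _ ≤ ‖blaschkeProduct Λ z‖ * ∑' n, 2 / δ * -Real.log (pd (Λ n) z) :=
        mul_le_mul_of_nonneg_left ((hsumL.mul_left _).tsum_le_tsum hterm hlog) hB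
    _ = ‖blaschkeProduct Λ z‖ / δ * Real.log (1 / ‖blaschkeProduct Λ z‖ ^ 2) := by
        rw [hlogB, tsum_mul_left]; ring

end Estimates

theorem statement16_general (Λ : ℕ → ℂ) (hΛ : BlaschkeSeq Λ)
    (z : ℂ) (hz : z ∈ unitDisk) (δ : ℝ) (hδ0 : 0 < δ)
    (hsep : ∀ n, δ ≤ pd z (Λ n)) :
    (∀ w ∈ unitDisk, pd z w < δ →
      ‖blaschkeProduct Λ z‖ ^ ((1 + pd z w / δ) / (1 - pd z w / δ)) ≤
          ‖blaschkeProduct Λ w‖ ∧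
        ‖blaschkeProduct Λ w‖ ≤
          ‖blaschkeProduct Λ z‖ ^ ((1 - pd z w / δ) / (1 + pd z w / δ))) ∧
    (1 - ‖z‖ ^ 2) * ‖deriv (blaschkeProduct Λ) z‖ ≤
      ‖blaschkeProduct Λ z‖ / δ *
        Real.log (1 / ‖blaschkeProduct Λ z‖ ^ 2) :=
  ⟨fun _ hw hwδ => norm_blaschkeProduct_harnack hΛ hz hw hsep hwδ,
    one_sub_sq_mul_norm_deriv_blaschkeProduct_le hΛ hz hδ0 hsep⟩

theorem statement16 (Λ : ℕ → ℂ) (hΛ : BlaschkeSeq Λ)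
    (z : ℂ) (hz : z ∈ unitDisk) (δ : ℝ) (hδ0 : 0 < δ) (hδ1 : δ < 1)
    (hsep : ∀ n, δ ≤ pd z (Λ n)) :
    (∀ w ∈ unitDisk, pd z w < δ →
      ‖blaschkeProduct Λ z‖ ^ ((1 + pd z w / δ) / (1 - pd z w / δ)) ≤
          ‖blaschkeProduct Λ w‖ ∧
        ‖blaschkeProduct Λ w‖ ≤
          ‖blaschkeProduct Λ z‖ ^ ((1 - pd z w / δ) / (1 + pd z w / δ))) ∧
    (1 - ‖z‖ ^ 2) * ‖deriv (blaschkeProduct Λ) z‖ ≤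
      ‖blaschkeProduct Λ z‖ / δ *
        Real.log (1 / ‖blaschkeProduct Λ z‖ ^ 2) :=
  statement16_general Λ hΛ z hz δ hδ0 hsep

end
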